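/- arXiv:1308.5333 — 5 statements merged into one kernel-verified Lean document; each statement's English description precedes it below -/
import Mathlib

section
/- Let f : ℝⁿ → ℝⁿ be a C¹ vector field with complete flow Φ, let φ : ℝⁿ → ℝ be smooth, and let a ∈ ℝ be a regular value of φ such that every value in some open neighborhood U of a is also a regular value of φ. Suppose that for every a' ∈ U there exists b' ∈ ℝ with φ⁻¹(a') ⊆ ψ⁻¹(b'), where ψ(x) = ⟨∇φ(x), f(x)⟩. Then there exists ε > 0 such that for all t ∈ (−ε, ε) and all x₁, x₂ ∈ φ⁻¹(a), one has φ(Φ(t, x₁)) = φ(Φ(t, x₂)). -/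
open scoped RealInnerProductSpace

open Set Metric


lemma trap_right {h g : ℝ → ℝ} {a δ M ε : ℝ} (hδ : 0 < δ)
    (hd : ∀ t, HasDerivAt h (g t) t)
    (hbound : ∀ t, |h t - a| ≤ δ → |g t| ≤ M)
    (h0 : h 0 = a) (hMε : M * ε < δ) :
    ∀ t ∈ Icc 0 ε, |h t - a| ≤ δ := by
  have hM : 0 ≤ M := le_trans (abs_nonneg _) (hbound 0 (by simp [h0, hδ.le]))
  have hhc : Continuous h := by
    have : Differentiable ℝ h := fun t => (hd t).differentiableAt
    exact this.continuous
  have hcont : Continuous fun t => |h t - a| := (hhc.sub continuous_const).abs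
  by_contra hcon
  push_neg at hcon
  obtain ⟨t₁, ht₁, ht₁'⟩ := hcon
  set B := {t | t ∈ Icc 0 ε ∧ δ ≤ |h t - a|} with hB
  have hBne : B.Nonempty := ⟨t₁, ht₁, ht₁'.le⟩
  have hBclosed : IsClosed B :=
    (isClosed_Icc.inter (isClosed_le continuous_const hcont) : IsClosed (Icc 0 ε ∩ _))
  have hBbdd : BddBelow B := ⟨0, fun t ht => ht.1.1⟩
  have ht₀B : sInf B ∈ B := hBclosed.csInf_mem hBne hBbdd
  set t₀ := sInf B with ht₀def
  have ht₀pos : 0 < t₀ := by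
    rcases ht₀B.1.1.lt_or_eq with h' | h'
    · exact h'
    · exfalso
      have := ht₀B.2
      rw [← h', h0] at this
      simp at this
      linarith
  have hlt : ∀ s, 0 ≤ s → s < t₀ → |h s - a| < δ := by
    intro s hs hst
    by_contra hge
    push_neg at hge
    have hsB : s ∈ B := ⟨⟨hs, hst.le.trans ht₀B.1.2⟩, hge⟩
    exact absurd (csInf_le hBbdd hsB) (not_le.2 hst)
  have hle : ∀ s ∈ Icc 0 t₀, |h s - a| ≤ δ := by
    intro s hs
    rcases hs.2.lt_or_eq with h' | h'
    · exact (hlt s hs.1 h').le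
    · subst h'
      have htend : Filter.Tendsto (fun u => |h u - a|) (nhdsWithin t₀ (Iio t₀)) (nhds (|h t₀ - a|)) :=
        (hcont.tendsto t₀).mono_left nhdsWithin_le_nhds
      refine le_of_tendsto htend ?_
      filter_upwards [self_mem_nhdsWithin,
        Filter.eventually_iff_exists_mem.mpr ⟨Ioi (0:ℝ), nhdsWithin_le_nhds (Ioi_mem_nhds ht₀pos), fun u hu => hu⟩]
        with u hu1 hu2
      exact (hlt u (le_of_lt hu2) hu1).le
  have key := Convex.norm_image_sub_le_of_norm_hasDerivWithin_le (f := h) (f' := g)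
      (fun s hs => (hd s).hasDerivWithinAt)
      (fun s hs => by simpa [Real.norm_eq_abs] using hbound s (hle s hs))
      (convex_Icc 0 t₀) (left_mem_Icc.2 ht₀pos.le) (right_mem_Icc.2 ht₀pos.le)
  rw [h0] at key
  simp only [Real.norm_eq_abs, sub_zero] at key
  have : |h t₀ - a| ≤ M * t₀ := by rwa [abs_of_pos ht₀pos] at key
  have hMt : M * t₀ ≤ M * ε := mul_le_mul_of_nonneg_left ht₀B.1.2 hM
  linarith [ht₀B.2]

lemma trap {h g : ℝ → ℝ} {a δ M ε : ℝ} (hδ : 0 < δ)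
    (hd : ∀ t, HasDerivAt h (g t) t)
    (hbound : ∀ t, |h t - a| ≤ δ → |g t| ≤ M)
    (h0 : h 0 = a) (hMε : M * ε < δ) :
    ∀ t ∈ Icc (-ε) ε, |h t - a| ≤ δ := by
  intro t ht
  rcases le_total 0 t with h' | h'
  · exact trap_right hδ hd hbound h0 hMε t ⟨h', ht.2⟩
  · have hd' : ∀ s, HasDerivAt (fun u => h (-u)) (-g (-s)) s := by
      intro s
      have := (hd (-s)).comp s (hasDerivAt_neg s)
      simpa [mul_comm, Function.comp_def] using this
    have := trap_right (h := fun u => h (-u)) (g := fun s => -g (-s)) hδ hd'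
      (fun s hs => by simpa using hbound (-s) hs) (by simpa using h0) hMε (-t)
      ⟨neg_nonneg.2 h', neg_le.mp ht.1⟩
    simpa using this



/-- If `a` is a regular value of the smooth function `φ`, every value in an
open neighborhood `U` of `a` is a regular value, and on each level set `φ⁻¹(a')` with
`a' ∈ U` the Lie derivative `ψ(x) = ⟪∇φ(x), f(x)⟫` is constant, then for small times the
flow propagation from `φ⁻¹(a)` preserves equality of `φ`-values. -/
theorem stmt_2 {n : ℕ}
    (f : EuclideanSpace ℝ (Fin n) → EuclideanSpace ℝ (Fin n))
    (hf : ContDiff ℝ 1 f)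
    (Φ : ℝ → EuclideanSpace ℝ (Fin n) → EuclideanSpace ℝ (Fin n))
    (hΦ0 : ∀ x, Φ 0 x = x)
    (hΦ : ∀ (t : ℝ) (x : EuclideanSpace ℝ (Fin n)),
      HasDerivAt (fun s => Φ s x) (f (Φ t x)) t)
    (φ : EuclideanSpace ℝ (Fin n) → ℝ)
    (hφ : ContDiff ℝ (⊤ : ℕ∞) φ)
    (a : ℝ) (U : Set ℝ) (hU : IsOpen U) (haU : a ∈ U)
    (hreg : ∀ a' ∈ U, ∀ x, φ x = a' → gradient φ x ≠ 0)
    (hconst : ∀ a' ∈ U, ∃ b' : ℝ, ∀ x, φ x = a' → ⟪gradient φ x, f x⟫ = b') :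
    ∃ ε > (0 : ℝ), ∀ t ∈ Set.Ioo (-ε) ε, ∀ x₁ x₂,
      φ x₁ = a → φ x₂ = a → φ (Φ t x₁) = φ (Φ t x₂) := by
  classical
  by_cases hex : ∃ x₀, φ x₀ = a
  swap
  · exact ⟨1, one_pos, fun t _ x₁ x₂ h1 _ => absurd ⟨x₁, h1⟩ hex⟩
  obtain ⟨x₀, hx₀⟩ := hex
  set ψ : EuclideanSpace ℝ (Fin n) → ℝ := fun y => ⟪gradient φ y, f y⟫ with hψdef
  have hφd : Differentiable ℝ φ := hφ.differentiable (by simp)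
  -- fderiv in terms of gradient
  have hfg : ∀ (y v : EuclideanSpace ℝ (Fin n)), fderiv ℝ φ y v = ⟪gradient φ y, v⟫ := by
    intro y v
    rw [show gradient φ y = (InnerProductSpace.toDual ℝ _).symm (fderiv ℝ φ y) from rfl]
    rw [← InnerProductSpace.toDual_apply_apply, LinearIsometryEquiv.apply_symm_apply]
  -- ψ is C¹
  have hgradC : ContDiff ℝ 1 (gradient φ) := by
    have h1 : ContDiff ℝ 1 (fderiv ℝ φ) := hφ.fderiv_right (by exact WithTop.coe_le_coe.mpr le_top)
    exact (InnerProductSpace.toDual ℝ _).symm.contDiff.comp h1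
  have hψC : ContDiff ℝ 1 ψ := hgradC.inner ℝ hf
  -- derivative of φ along the flow
  have hDeriv : ∀ (x : EuclideanSpace ℝ (Fin n)) (t : ℝ),
      HasDerivAt (fun s => φ (Φ s x)) (ψ (Φ t x)) t := by
    intro x t
    have h1 := (hφd (Φ t x)).hasFDerivAt.comp_hasDerivAt t (hΦ t x)
    rwa [hfg] at h1
  -- the transversal curve
  set g₀ : EuclideanSpace ℝ (Fin n) := gradient φ x₀ with hg₀def
  have hg₀ : g₀ ≠ 0 := hreg a haU x₀ hx₀
  set v : EuclideanSpace ℝ (Fin n) := (‖g₀‖ ^ 2)⁻¹ • g₀ with hvdef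
  set c : ℝ → EuclideanSpace ℝ (Fin n) := fun s => x₀ + (s - a) • v with hcdef
  have hcC : ContDiff ℝ (⊤ : ℕ∞) c :=
    contDiff_const.add ((contDiff_id.sub contDiff_const).smul contDiff_const)
  have hca : c a = x₀ := by simp [hcdef]
  set γ : ℝ → ℝ := fun s => φ (c s) with hγdef
  have hγC : ContDiff ℝ (⊤ : ℕ∞) γ := hφ.comp hcC
  have hγa : γ a = a := by rw [hγdef]; simp only [hca]; exact hx₀
  have hcd : ∀ s, HasDerivAt c v s := by
    intro s
    have h1 : HasDerivAt (fun u : ℝ => (u - a) • v) ((1:ℝ) • v) s :=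
      ((hasDerivAt_id s).sub_const a).smul_const v
    have h2 := h1.const_add x₀
    rw [one_smul] at h2
    exact h2
  have hγ1 : HasDerivAt γ 1 a := by
    have h1 := (hφd (c a)).hasFDerivAt.comp_hasDerivAt a (hcd a)
    rw [hfg, hca] at h1
    have : ⟪gradient φ x₀, v⟫ = 1 := by
      rw [hvdef, real_inner_smul_right, ← hg₀def, real_inner_self_eq_norm_sq]
      field_simp [norm_ne_zero_iff.mpr hg₀]
    rwa [this] at h1
  have hγs : HasStrictDerivAt γ 1 a := by
    have := (hγC.contDiffAt (x := a)).hasStrictDerivAt (by simp)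
    rwa [hγ1.deriv] at this
  -- local inverse u of γ near a
  set u : ℝ → ℝ := hγs.localInverse γ 1 a one_ne_zero with hudef
  have hFD := hγs.hasStrictFDerivAt_equiv one_ne_zero
  have hu_inv : ∀ᶠ s in nhds a, γ (u s) = s := by
    have := hFD.eventually_right_inverse
    rwa [hγa] at this
  have hu_a : u a = a := by
    have := hFD.localInverse_apply_image
    rwa [hγa] at this
  have hu_cont : ContinuousAt u a := by
    have := hFD.localInverse_continuousAt
    rwa [hγa] at this
  have hu_strict : HasStrictDerivAt u 1 a := by
    have := hγs.to_localInverse one_ne_zero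
    rw [hγa] at this
    simpa using this
  -- Lipschitz data
  obtain ⟨K₁, t₁, ht₁, hLip₁⟩ := hu_strict.hasStrictFDerivAt.exists_lipschitzOnWith
  obtain ⟨K₂, t₂, ht₂, hLip₂⟩ :=
    ((hψC.comp (hcC.of_le (by simp))).contDiffAt (x := a)).exists_lipschitzOnWith
  -- β and its Lipschitz extension
  set β : ℝ → ℝ := fun s => ψ (c (u s)) with hβdef
  have ht₂' : u ⁻¹' t₂ ∈ nhds a := by
    apply hu_cont
    rwa [hu_a]
  set t₃ := t₁ ∩ u ⁻¹' t₂ with ht₃def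
  have ht₃ : t₃ ∈ nhds a := Filter.inter_mem ht₁ ht₂'
  have hβLip : LipschitzOnWith (K₂ * K₁) β t₃ := by
    have := hLip₂.comp (hLip₁.mono inter_subset_left)
      (fun s (hs : s ∈ t₃) => hs.2)
    simpa [hβdef, Function.comp_def] using this
  obtain ⟨β', hβ'L, hβ'eq⟩ := hβLip.extend_real
  -- the good neighborhood W
  set W := t₃ ∩ U ∩ {s | γ (u s) = s} with hWdef
  have hW : W ∈ nhds a :=
    Filter.inter_mem (Filter.inter_mem ht₃ (hU.mem_nhds haU)) hu_inv
  have key : ∀ s ∈ W, ∀ x, φ x = s → ψ x = β' s := by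
    intro s hs x hx
    obtain ⟨b', hb'⟩ := hconst s hs.1.2
    have h1 : ψ x = b' := hb' x hx
    have h2 : ψ (c (u s)) = b' := hb' _ hs.2
    have h3 : β s = β' s := hβ'eq hs.1.1
    rw [h1, ← h2]
    exact h3
  -- choose δ
  obtain ⟨r, hr, hrW⟩ := Metric.mem_nhds_iff.mp hW
  set δ := r / 2 with hδdef
  have hδ : 0 < δ := by positivity
  have hW' : ∀ s : ℝ, |s - a| ≤ δ → s ∈ W := by
    intro s hs
    apply hrW
    rw [mem_ball, Real.dist_eq]
    linarith
  -- the bound M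
  set M : ℝ := (↑(K₂ * K₁) : ℝ) * δ + |β' a| with hMdef
  have hMbound : ∀ s : ℝ, |s - a| ≤ δ → |β' s| ≤ M := by
    intro s hs
    have h1 := hβ'L.dist_le_mul s a
    rw [Real.dist_eq, Real.dist_eq] at h1
    have h2 : |β' s| ≤ |β' s - β' a| + |β' a| := by
      have := abs_add_le (β' s - β' a) (β' a); simpa using this
    have h3 : (↑(K₂ * K₁) : ℝ) * |s - a| ≤ (↑(K₂ * K₁) : ℝ) * δ :=
      mul_le_mul_of_nonneg_left hs (by positivity)
    rw [hMdef]
    linarith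
  have hM0 : 0 ≤ M := by
    have h4 := abs_nonneg (β' a)
    have h5 : (0:ℝ) ≤ (↑(K₂ * K₁) : ℝ) * δ := by positivity
    rw [hMdef]; linarith
  -- choose ε
  set ε := δ / (M + 1) with hεdef
  have hε : 0 < ε := div_pos hδ (by linarith)
  have hMε : M * ε < δ := by
    rw [hεdef, mul_div_assoc'] at *
    rw [div_lt_iff₀ (by linarith : (0:ℝ) < M + 1)]
    nlinarith
  refine ⟨ε, hε, ?_⟩
  intro t ht x₁ x₂ hx1 hx2
  -- trap: the flow stays in W for |s| ≤ ε
  have htrap : ∀ (x : EuclideanSpace ℝ (Fin n)), φ x = a →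
      ∀ s ∈ Icc (-ε) ε, |φ (Φ s x) - a| ≤ δ := by
    intro x hx
    refine trap hδ (hDeriv x) ?_ (by simp [hΦ0, hx]) hMε
    intro s hs
    have hsW := hW' _ hs
    rw [key _ hsW _ rfl]
    exact hMbound _ hs
  -- both solutions satisfy the ODE y' = β' y on Icc (-ε) ε
  have hODE : ∀ (x : EuclideanSpace ℝ (Fin n)), φ x = a →
      ∀ s ∈ Ioo (-ε) ε, HasDerivAt (fun r => φ (Φ r x)) (β' (φ (Φ s x))) s := by
    intro x hx s hs
    have h1 := hDeriv x s
    have h2 : |φ (Φ s x) - a| ≤ δ := htrap x hx s (Ioo_subset_Icc_self hs)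
    rwa [key _ (hW' _ h2) _ rfl] at h1
  have hcont : ∀ (x : EuclideanSpace ℝ (Fin n)),
      ContinuousOn (fun r => φ (Φ r x)) (Icc (-ε) ε) := by
    intro x
    have : Differentiable ℝ (fun r => φ (Φ r x)) := fun s => (hDeriv x s).differentiableAt
    exact this.continuous.continuousOn
  have huniq := ODE_solution_unique_of_mem_Icc
    (v := fun _ y => β' y) (s := fun _ => (univ : Set ℝ))
    (fun _ _ => hβ'L.lipschitzOnWith)
    (show (0:ℝ) ∈ Ioo (-ε) ε from ⟨neg_lt_zero.2 hε, hε⟩)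
    (hcont x₁) (hODE x₁ hx1) (fun _ _ => mem_univ _)
    (hcont x₂) (hODE x₂ hx2) (fun _ _ => mem_univ _)
    (by simp [hΦ0, hx1, hx2])
  exact huniq (Ioo_subset_Icc_self ht)
end

section
/- Let f : ℝⁿ → ℝⁿ be a C¹ vector field with complete flow Φ, and let φ : ℝⁿ → ℝ be a continuous function that is forward flow-coherent: for all x₁, x₂ with φ(x₁) = φ(x₂) and all t ≥ 0, φ(Φ(t, x₁)) = φ(Φ(t, x₂)). Let p be a singular point of f (f(p) = 0). Then the level set φ⁻¹(φ(p)) is positively invariant as a level set: for every x with φ(x) = φ(p) and every t ≥ 0, φ(Φ(t, x)) = φ(p). Moreover, if φ is continuously differentiable, then the Lie derivative ψ(x) = ⟨∇φ(x), f(x)⟩ vanishes at every point x of the level set φ⁻¹(φ(p)). -/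
open scoped RealInnerProductSpace
open Set Filter Topology

/-! A singular point `p` is fixed by the flow, by uniqueness of solutions of the ODE near the
equilibrium. Flow-coherence applied to `x` and `p` then gives `φ (Φ t x) = φ (Φ t p) = φ p` for
`t ≥ 0`, so `t ↦ φ (Φ t x)` is constant on `[0, ∞)` and its one-sided derivative at `0`, which is
the Lie derivative `⟪∇φ x, f x⟫`, vanishes. -/

section Equilibrium

variable {E : Type*} [NormedAddCommGroup E] [NormedSpace ℝ E]
  {f : E → E} {p : E} {γ : ℝ → E}

theorem ODE_solution_eventuallyEq_equilibrium (hf : ContDiffAt ℝ 1 f p) (hp : f p = 0)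
    (hγ : ∀ t, HasDerivAt γ (f (γ t)) t) {t₀ : ℝ} (ht₀ : γ t₀ = p) :
    γ =ᶠ[𝓝 t₀] fun _ => p := by
  obtain ⟨K, s, hs, hK⟩ := hf.exists_lipschitzOnWith
  have hγs : ∀ᶠ t in 𝓝 t₀, γ t ∈ s := (hγ t₀).continuousAt.preimage_mem_nhds (ht₀ ▸ hs)
  have hconst : ∀ t, HasDerivAt (fun _ => p) (f p) t := fun t : ℝ => hp ▸ hasDerivAt_const t p
  exact ODE_solution_unique_of_eventually (v := fun _ => f) (s := fun _ => s)
    (.of_forall fun _ => hK) (hγs.mono fun t ht => ⟨hγ t, ht⟩)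
    (.of_forall fun t => ⟨hconst t, mem_of_mem_nhds hs⟩) ht₀

theorem ODE_solution_eq_equilibrium (hf : ContDiffAt ℝ 1 f p) (hp : f p = 0)
    (hγ : ∀ t, HasDerivAt γ (f (γ t)) t) {t₀ : ℝ} (ht₀ : γ t₀ = p) (t : ℝ) : γ t = p := by
  have hclopen : IsClopen {t | γ t = p} :=
    ⟨isClosed_eq (continuous_iff_continuousAt.2 fun t => (hγ t).continuousAt) continuous_const,
      isOpen_iff_mem_nhds.2 fun _ ht => ODE_solution_eventuallyEq_equilibrium hf hp hγ ht⟩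
  exact show t ∈ {t | γ t = p} from hclopen.eq_univ ⟨t₀, ht₀⟩ ▸ mem_univ t

end Equilibrium

theorem fderiv_apply_eq_zero_of_comp_const_on_Ici {F : Type*} [NormedAddCommGroup F]
    [NormedSpace ℝ F] {g : F → ℝ} {γ : ℝ → F} {x v : F} (hg : DifferentiableAt ℝ g x)
    (hγ0 : γ 0 = x) (hγ : HasDerivAt γ v 0) (hconst : ∀ t ≥ (0 : ℝ), g (γ t) = g x) :
    fderiv ℝ g x v = 0 := by
  subst hγ0
  have hcomp : HasDerivWithinAt (g ∘ γ) (fderiv ℝ g (γ 0) v) (Ici 0) 0 :=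
    (hg.hasFDerivAt.comp_hasDerivAt 0 hγ).hasDerivWithinAt
  have hzero : HasDerivWithinAt (g ∘ γ) 0 (Ici 0) 0 :=
    (hasDerivWithinAt_const 0 (Ici 0) (g (γ 0))).congr hconst (hconst 0 le_rfl)
  exact (uniqueDiffOn_Ici 0 0 self_mem_Ici).eq_deriv _ hcomp hzero

theorem stmt_4_general {n : ℕ}
    (f : EuclideanSpace ℝ (Fin n) → EuclideanSpace ℝ (Fin n))
    (hf : ContDiff ℝ 1 f)
    (Φ : ℝ → EuclideanSpace ℝ (Fin n) → EuclideanSpace ℝ (Fin n))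
    (hΦ0 : ∀ x, Φ 0 x = x)
    (hΦ : ∀ (t : ℝ) (x : EuclideanSpace ℝ (Fin n)),
      HasDerivAt (fun s => Φ s x) (f (Φ t x)) t)
    (φ : EuclideanSpace ℝ (Fin n) → ℝ)
    (hcoh : ∀ x₁ x₂, φ x₁ = φ x₂ → ∀ t ≥ (0 : ℝ), φ (Φ t x₁) = φ (Φ t x₂))
    (p : EuclideanSpace ℝ (Fin n)) (hp : f p = 0) :
    (∀ x, φ x = φ p → ∀ t ≥ (0 : ℝ), φ (Φ t x) = φ p) ∧
      (ContDiff ℝ 1 φ → ∀ x, φ x = φ p → ⟪gradient φ x, f x⟫ = 0) := by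
  have hfix : ∀ t, Φ t p = p :=
    ODE_solution_eq_equilibrium hf.contDiffAt hp (hΦ · p) (hΦ0 p)
  have hlevel : ∀ x, φ x = φ p → ∀ t ≥ (0 : ℝ), φ (Φ t x) = φ p := fun x hx t ht => by
    rw [hcoh x p hx t ht, hfix t]
  refine ⟨hlevel, fun hφ x hx => ?_⟩
  rw [inner_gradient_left]
  exact fderiv_apply_eq_zero_of_comp_const_on_Ici (hφ.differentiable one_ne_zero x) (hΦ0 x)
    (by simpa only [hΦ0] using hΦ 0 x) fun t ht => (hlevel x hx t ht).trans hx.symm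

/-- If `φ` is continuous and forward flow-coherent and `p` is a singular
point of `f`, then the level set `φ⁻¹(φ(p))` is positively invariant as a level set;
moreover, if `φ` is continuously differentiable then the Lie derivative
`ψ(x) = ⟪∇φ(x), f(x)⟫` vanishes on that level set. -/
theorem stmt_4 {n : ℕ}
    (f : EuclideanSpace ℝ (Fin n) → EuclideanSpace ℝ (Fin n))
    (hf : ContDiff ℝ 1 f)
    (Φ : ℝ → EuclideanSpace ℝ (Fin n) → EuclideanSpace ℝ (Fin n))
    (hΦ0 : ∀ x, Φ 0 x = x)
    (hΦ : ∀ (t : ℝ) (x : EuclideanSpace ℝ (Fin n)),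
      HasDerivAt (fun s => Φ s x) (f (Φ t x)) t)
    (φ : EuclideanSpace ℝ (Fin n) → ℝ)
    (hφcont : Continuous φ)
    (hcoh : ∀ x₁ x₂, φ x₁ = φ x₂ → ∀ t ≥ (0 : ℝ), φ (Φ t x₁) = φ (Φ t x₂))
    (p : EuclideanSpace ℝ (Fin n)) (hp : f p = 0) :
    (∀ x, φ x = φ p → ∀ t ≥ (0 : ℝ), φ (Φ t x) = φ p) ∧
      (ContDiff ℝ 1 φ → ∀ x, φ x = φ p → ⟪gradient φ x, f x⟫ = 0) :=
  stmt_4_general f hf Φ hΦ0 hΦ φ hcoh p hp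
end

section
/- Let n ≥ 2 and let f : ℝⁿ → ℝⁿ be a C¹ vector field with complete flow Φ whose singular points (zeros) are isolated. Let φ : ℝⁿ → ℝ be continuously differentiable, forward flow-coherent (for all x₁, x₂ with φ(x₁) = φ(x₂) and all t ≥ 0, φ(Φ(t, x₁)) = φ(Φ(t, x₂))), and suppose the Lie derivative satisfies ψ(x) = ⟨∇φ(x), f(x)⟩ < 0 for every x with f(x) ≠ 0. Then every singular point p of f is a critical point of φ, i.e., ∇φ(p) = 0. -/
open scoped RealInnerProductSpace
open Filter Topology

/-!
If `∇φ(p) ≠ 0`, the implicit function theorem makes the level set `{φ = φ(p)}` a hypersurface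
through `p` of dimension `n - 1 ≥ 1`, so it contains points `x ≠ p` arbitrarily close to `p`,
which are regular points of `f` because singular points are isolated. Flow-coherence gives
`φ(Φ(t, x)) = φ(Φ(t, p))` for `t ≥ 0`; differentiating at `t = 0⁺` yields
`⟪∇φ(x), f(x)⟫ = ⟪∇φ(p), f(p)⟫ = 0`, contradicting the negativity of the Lie derivative
at `x`.
-/

section LevelSet

variable {𝕜 E F : Type*} [NontriviallyNormedField 𝕜] [CompleteSpace 𝕜]
  [NormedAddCommGroup E] [NormedSpace 𝕜 E] [NormedAddCommGroup F] [NormedSpace 𝕜 F]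
  {f : E → F} {f' : E →L[𝕜] F} {a : E}

theorem HasStrictFDerivAt.frequently_eq_of_nontrivial_ker [CompleteSpace E]
    [FiniteDimensional 𝕜 F] (hf : HasStrictFDerivAt f f' a) (hf' : f'.range = ⊤)
    [Nontrivial f'.ker] : ∃ᶠ x in 𝓝[≠] a, f x = f a := by
  obtain ⟨z, hz⟩ := exists_ne (0 : f'.ker)
  set Ψ := hf.implicitToOpenPartialHomeomorph f f' hf'
  set g : 𝕜 → E := fun t => hf.implicitFunction f f' hf' (f a) (t • z)
  have hline : Tendsto (fun t : 𝕜 => t • z) (𝓝 0) (𝓝 0) := by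
    simpa using (tendsto_id (x := 𝓝 (0 : 𝕜))).smul_const z
  have hΨg : ∀ᶠ t : 𝕜 in 𝓝 0, Ψ (g t) = (f a, t • z) :=
    (tendsto_const_nhds.prodMk_nhds hline).eventually
      (Ψ.open_target.mem_nhds (hf.mem_implicitToOpenPartialHomeomorph_target hf'))
      |>.mono fun t ht => Ψ.right_inv ht
  have hg : Tendsto g (𝓝[≠] 0) (𝓝[≠] a) := by
    refine tendsto_nhdsWithin_iff.2 ⟨?_, ?_⟩
    · exact (hf.tendsto_implicitFunction hf' tendsto_const_nhds hline).mono_left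
        nhdsWithin_le_nhds
    · filter_upwards [nhdsWithin_le_nhds hΨg, self_mem_nhdsWithin] with t ht ht0 hga
      rw [hga, hf.implicitToOpenPartialHomeomorph_self] at ht
      exact smul_ne_zero ht0 hz (congrArg Prod.snd ht).symm
  refine hg.frequently (Eventually.frequently ?_)
  filter_upwards [nhdsWithin_le_nhds hΨg] with t ht
  exact congrArg Prod.fst ht

theorem HasStrictFDerivAt.frequently_eq_of_ne_zero [FiniteDimensional 𝕜 E] {φ : E → 𝕜}
    {φ' : E →L[𝕜] 𝕜} (hφ : HasStrictFDerivAt φ φ' a) (hE : 1 < Module.finrank 𝕜 E)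
    (hφ' : φ' ≠ 0) : ∃ᶠ x in 𝓝[≠] a, φ x = φ a := by
  have : CompleteSpace E := FiniteDimensional.complete 𝕜 E
  have : Nontrivial φ'.ker := Submodule.nontrivial_iff_ne_bot.2 <|
    LinearMap.ker_ne_bot_of_finrank_lt (by rwa [Module.finrank_self])
  exact hφ.frequently_eq_of_nontrivial_ker
    (Module.Dual.range_eq_top_of_ne_zero (by exact_mod_cast hφ'))

end LevelSet

section Flow

variable {E : Type*} [NormedAddCommGroup E] [InnerProductSpace ℝ E] [CompleteSpace E]
  {f : E → E} {Φ : ℝ → E → E} {φ : E → ℝ}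

def IsForwardFlowCoherent {X β : Type*} (Φ : ℝ → X → X) (φ : X → β) : Prop :=
  ∀ x₁ x₂, φ x₁ = φ x₂ → ∀ t ≥ (0 : ℝ), φ (Φ t x₁) = φ (Φ t x₂)

theorem hasDerivAt_comp_flow_zero {x : E} (hΦ0 : Φ 0 x = x)
    (hΦ : HasDerivAt (fun s => Φ s x) (f x) 0) (hφ : DifferentiableAt ℝ φ x) :
    HasDerivAt (fun s => φ (Φ s x)) ⟪gradient φ x, f x⟫ 0 := by
  have hφ' : HasFDerivAt φ (fderiv ℝ φ x) (Φ 0 x) := by rw [hΦ0]; exact hφ.hasFDerivAt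
  rw [inner_gradient_left]
  exact hφ'.comp_hasDerivAt 0 hΦ

theorem IsForwardFlowCoherent.inner_gradient_eq (hcoh : IsForwardFlowCoherent Φ φ)
    (hΦ0 : ∀ x, Φ 0 x = x) (hΦ : ∀ x, HasDerivAt (fun s => Φ s x) (f x) 0)
    (hφ : Differentiable ℝ φ) {x₁ x₂ : E} (h : φ x₁ = φ x₂) :
    ⟪gradient φ x₁, f x₁⟫ = ⟪gradient φ x₂, f x₂⟫ := by
  have h₁ := hasDerivAt_comp_flow_zero (hΦ0 x₁) (hΦ x₁) (hφ x₁)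
  have h₂ := hasDerivAt_comp_flow_zero (hΦ0 x₂) (hΦ x₂) (hφ x₂)
  exact (uniqueDiffOn_Ici 0 0 Set.self_mem_Ici).eq_deriv _ h₁.hasDerivWithinAt
    (h₂.hasDerivWithinAt.congr (fun t ht => hcoh x₁ x₂ h t ht) (hcoh x₁ x₂ h 0 le_rfl))

end Flow

theorem stmt_5_general {n : ℕ} (hn : 2 ≤ n)
    (f : EuclideanSpace ℝ (Fin n) → EuclideanSpace ℝ (Fin n))
    (Φ : ℝ → EuclideanSpace ℝ (Fin n) → EuclideanSpace ℝ (Fin n))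
    (hΦ0 : ∀ x, Φ 0 x = x)
    (hΦ : ∀ (t : ℝ) (x : EuclideanSpace ℝ (Fin n)),
      HasDerivAt (fun s => Φ s x) (f (Φ t x)) t)
    (hiso : ∀ p, f p = 0 → ∃ V ∈ nhds p, ∀ x ∈ V, f x = 0 → x = p)
    (φ : EuclideanSpace ℝ (Fin n) → ℝ)
    (hφ : ContDiff ℝ 1 φ)
    (hcoh : ∀ x₁ x₂, φ x₁ = φ x₂ → ∀ t ≥ (0 : ℝ), φ (Φ t x₁) = φ (Φ t x₂))
    (hneg : ∀ x, f x ≠ 0 → ⟪gradient φ x, f x⟫ < 0) :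
    ∀ p, f p = 0 → gradient φ p = 0 := by
  intro p hp
  by_contra hgrad
  have hlevel : ∃ᶠ x in 𝓝[≠] p, φ x = φ p :=
    (hφ.contDiffAt.hasStrictFDerivAt one_ne_zero).frequently_eq_of_ne_zero
      (by rwa [finrank_euclideanSpace_fin]) (by simpa [gradient] using hgrad)
  have hregular : ∀ᶠ x in 𝓝[≠] p, f x ≠ 0 := by
    obtain ⟨V, hV, hVp⟩ := hiso p hp
    filter_upwards [nhdsWithin_le_nhds hV, self_mem_nhdsWithin] with x hxV hxp hfx
    exact hxp (hVp x hxV hfx)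
  obtain ⟨x, hφx, hfx⟩ := (hlevel.and_eventually hregular).exists
  have hlie := IsForwardFlowCoherent.inner_gradient_eq hcoh hΦ0
    (fun y => by simpa only [hΦ0] using hΦ 0 y) (hφ.differentiable one_ne_zero) hφx
  rw [hp, inner_zero_right] at hlie
  exact (hneg x hfx).ne hlie

/-- Let `n ≥ 2`, let `f` be a C¹ vector field with complete flow `Φ` whose
zeros are isolated, and let `φ` be a C¹, forward flow-coherent function whose Lie
derivative `⟪∇φ(x), f(x)⟫` is negative at every non-singular point. Then every singular
point of `f` is a critical point of `φ`. -/
theorem stmt_5 {n : ℕ} (hn : 2 ≤ n)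
    (f : EuclideanSpace ℝ (Fin n) → EuclideanSpace ℝ (Fin n))
    (hf : ContDiff ℝ 1 f)
    (Φ : ℝ → EuclideanSpace ℝ (Fin n) → EuclideanSpace ℝ (Fin n))
    (hΦ0 : ∀ x, Φ 0 x = x)
    (hΦ : ∀ (t : ℝ) (x : EuclideanSpace ℝ (Fin n)),
      HasDerivAt (fun s => Φ s x) (f (Φ t x)) t)
    (hiso : ∀ p, f p = 0 → ∃ V ∈ nhds p, ∀ x ∈ V, f x = 0 → x = p)
    (φ : EuclideanSpace ℝ (Fin n) → ℝ)
    (hφ : ContDiff ℝ 1 φ)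
    (hcoh : ∀ x₁ x₂, φ x₁ = φ x₂ → ∀ t ≥ (0 : ℝ), φ (Φ t x₁) = φ (Φ t x₂))
    (hneg : ∀ x, f x ≠ 0 → ⟪gradient φ x, f x⟫ < 0) :
    ∀ p, f p = 0 → gradient φ p = 0 :=
  stmt_5_general hn f Φ hΦ0 hΦ hiso φ hφ hcoh hneg
end

section
/- Let f : ℝⁿ → ℝⁿ be a C¹ vector field with complete flow Φ, and let φ : ℝⁿ → ℝ be continuous and forward flow-coherent: for all x₁, x₂ with φ(x₁) = φ(x₂) and all t ≥ 0, φ(Φ(t, x₁)) = φ(Φ(t, x₂)). Let p and p' be singular points of f, and suppose there exist x ∈ W^s(p) and y ∈ W^s(p') with φ(x) = φ(y). Then φ(p) = φ(p'). -/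
open Filter

/-- If `φ` is continuous and forward flow-coherent, `p` and `p'` are
singular points of `f`, and there are points `x ∈ W^s(p)` and `y ∈ W^s(p')` with
`φ(x) = φ(y)`, then `φ(p) = φ(p')`. -/
theorem stmt_8 {n : ℕ}
    (f : EuclideanSpace ℝ (Fin n) → EuclideanSpace ℝ (Fin n))
    (hf : ContDiff ℝ 1 f)
    (Φ : ℝ → EuclideanSpace ℝ (Fin n) → EuclideanSpace ℝ (Fin n))
    (hΦ0 : ∀ x, Φ 0 x = x)
    (hΦ : ∀ (t : ℝ) (x : EuclideanSpace ℝ (Fin n)),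
      HasDerivAt (fun s => Φ s x) (f (Φ t x)) t)
    (φ : EuclideanSpace ℝ (Fin n) → ℝ)
    (hφcont : Continuous φ)
    (hcoh : ∀ x₁ x₂, φ x₁ = φ x₂ → ∀ t ≥ (0 : ℝ), φ (Φ t x₁) = φ (Φ t x₂))
    (p p' : EuclideanSpace ℝ (Fin n)) (hp : f p = 0) (hp' : f p' = 0)
    (x y : EuclideanSpace ℝ (Fin n))
    (hx : Tendsto (fun t => Φ t x) atTop (nhds p))
    (hy : Tendsto (fun t => Φ t y) atTop (nhds p'))
    (hxy : φ x = φ y) :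
    φ p = φ p' := by
  have h1 : Tendsto (fun t => φ (Φ t x)) atTop (nhds (φ p)) :=
    (hφcont.continuousAt.tendsto).comp hx
  have h2 : Tendsto (fun t => φ (Φ t y)) atTop (nhds (φ p')) :=
    (hφcont.continuousAt.tendsto).comp hy
  have heq : ∀ᶠ t in atTop, φ (Φ t x) = φ (Φ t y) :=
    (eventually_ge_atTop 0).mono fun t ht => hcoh x y hxy t ht
  exact tendsto_nhds_unique (h1.congr' heq) h2
end

section
/- Let g : ℝ → ℝ be defined by g(t) = h(t)/(h(t) + h(1 − t)) where h(t) = e^{−1/t} for t > 0 and h(t) = 0 for t ≤ 0, and define φ̃₁ : ℝ² → ℝ by φ̃₁(x₁, x₂) = g((x₁² − 1/4)/(15/4)) · x₁² (the bump-modified partitioning function with a = 1/2, b = 2). Consider the saddle system f(x₁, x₂) = (−x₁, x₂) with singular point p = (0, 0). Then φ̃₁(p) = 0, the level set φ̃₁⁻¹({0}) equals the strip {(x₁, x₂) ∈ ℝ² : |x₁| ≤ 1/2}, and the unstable manifold W^u(p) = {0} × ℝ is a proper subset of φ̃₁⁻¹(φ̃₁(p)). -/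
open Filter

/-- The basic smooth-bump ingredient `h(t) = e^{-1/t}` for `t > 0`, `h(t) = 0` for `t ≤ 0`. -/
noncomputable def bumpH (t : ℝ) : ℝ := if 0 < t then Real.exp (-1 / t) else 0

/-- The smooth step `g(t) = h(t)/(h(t) + h(1 - t))`. -/
noncomputable def bumpG (t : ℝ) : ℝ := bumpH t / (bumpH t + bumpH (1 - t))


lemma bumpH_nonneg (t : ℝ) : 0 ≤ bumpH t := by
  unfold bumpH; split
  · positivity
  · exact le_rfl

lemma bumpG_eq_zero_iff (t : ℝ) : bumpG t = 0 ↔ t ≤ 0 := by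
  unfold bumpG bumpH
  rcases le_or_gt t 0 with h | h
  · simp [not_lt.2 h, h]
  · have h1 : (if 0 < t then Real.exp (-1 / t) else 0) = Real.exp (-1/t) := if_pos h
    rw [h1]
    have hd : 0 < Real.exp (-1/t) + (if 0 < 1 - t then Real.exp (-1 / (1-t)) else 0) := by
      have := bumpH_nonneg (1 - t)
      unfold bumpH at this
      positivity
    constructor
    · intro hz
      exact absurd (div_eq_zero_iff.mp hz) (by push_neg; exact ⟨(Real.exp_pos _).ne', hd.ne'⟩)
    · intro hz; linarith

/-- The bump-modified partitioning function
`φ̃₁(x₁, x₂) = g((x₁² − 1/4)/(15/4)) · x₁²` (i.e. `a = 1/2`, `b = 2`). -/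
noncomputable def phiTilde (x : EuclideanSpace ℝ (Fin 2)) : ℝ :=
  bumpG (((x 0) ^ 2 - 1 / 4) / (15 / 4)) * (x 0) ^ 2


lemma phiTilde_eq_zero_iff (x : EuclideanSpace ℝ (Fin 2)) :
    phiTilde x = 0 ↔ |x 0| ≤ 1 / 2 := by
  unfold phiTilde
  rw [mul_eq_zero, bumpG_eq_zero_iff]
  constructor
  · rintro (h | h)
    · have : (x 0) ^ 2 ≤ 1 / 4 := by
        have h15 : (0:ℝ) < 15 / 4 := by norm_num
        rw [div_nonpos_iff] at h
        rcases h with ⟨h1, _⟩ | ⟨h1, h2⟩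
        · linarith
        · linarith
      nlinarith [abs_nonneg (x 0), sq_abs (x 0)]
    · nlinarith [abs_nonneg (x 0), sq_abs (x 0), pow_eq_zero_iff (n := 2) (two_ne_zero) |>.mp h]
  · intro h
    left
    have : (x 0) ^ 2 ≤ 1 / 4 := by nlinarith [sq_abs (x 0), abs_nonneg (x 0)]
    apply div_nonpos_of_nonpos_of_nonneg <;> [linarith; norm_num]

lemma flow_tendsto_iff (x : EuclideanSpace ℝ (Fin 2))
    (Φ : ℝ → EuclideanSpace ℝ (Fin 2) → EuclideanSpace ℝ (Fin 2))
    (hΦ : ∀ (t : ℝ) (y : EuclideanSpace ℝ (Fin 2)),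
      Φ t y 0 = y 0 * Real.exp (-t) ∧ Φ t y 1 = y 1 * Real.exp t) :
    Tendsto (fun t => Φ t x) atBot (nhds 0) ↔ x 0 = 0 := by
  constructor
  · intro h
    by_contra hx
    have h0 : Tendsto (fun t => Φ t x 0) atBot (nhds ((0 : EuclideanSpace ℝ (Fin 2)) 0)) :=
      ((EuclideanSpace.proj (0 : Fin 2) :
        EuclideanSpace ℝ (Fin 2) →L[ℝ] ℝ).continuous.tendsto _).comp h
    have h0' : Tendsto (fun t => |x 0| * Real.exp (-t)) atBot (nhds 0) := by
      have := h0.abs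
      simp only [Function.comp] at this
      convert this using 2 with t
      · rw [(hΦ t x).1, abs_mul, abs_of_pos (Real.exp_pos _)]
      · simp
    have h1 : Tendsto (fun t => |x 0| * Real.exp (-t)) atBot atTop :=
      (Real.tendsto_exp_atTop.comp tendsto_neg_atBot_atTop).const_mul_atTop (abs_pos.2 hx)
    exact not_tendsto_nhds_of_tendsto_atTop h1 0 h0'
  · intro hx
    rw [tendsto_zero_iff_norm_tendsto_zero]
    have hn : ∀ t, ‖Φ t x‖ = |x 1| * Real.exp t := by
      intro t
      rw [EuclideanSpace.norm_eq]
      rw [Fin.sum_univ_two, (hΦ t x).1, (hΦ t x).2, hx]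
      simp [abs_mul, abs_of_pos (Real.exp_pos t), mul_pow]
      rw [show x 1 ^ 2 * Real.exp t ^ 2 = (|x 1| * Real.exp t)^2 by rw [mul_pow, sq_abs]]
      exact Real.sqrt_sq (by positivity)
    simp only [hn]
    have := Real.tendsto_exp_atBot.const_mul |x 1|
    simpa using this

/-- For the saddle system `f(x₁,x₂) = (−x₁, x₂)` with flow
`Φ(t,(a,b)) = (a e^{−t}, b e^{t})` and singular point `p = (0,0)`, the bump-modified
function `φ̃₁` satisfies `φ̃₁(p) = 0`, `φ̃₁⁻¹({0}) = {|x₁| ≤ 1/2}`, and the unstable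
manifold `W^u(p) = {0} × ℝ` is a proper subset of `φ̃₁⁻¹(φ̃₁(p))`. -/
theorem stmt_15
    (f : EuclideanSpace ℝ (Fin 2) → EuclideanSpace ℝ (Fin 2))
    (hf : ∀ x, f x 0 = -(x 0) ∧ f x 1 = x 1)
    (Φ : ℝ → EuclideanSpace ℝ (Fin 2) → EuclideanSpace ℝ (Fin 2))
    (hΦ : ∀ (t : ℝ) (x : EuclideanSpace ℝ (Fin 2)),
      Φ t x 0 = x 0 * Real.exp (-t) ∧ Φ t x 1 = x 1 * Real.exp t)
    (p : EuclideanSpace ℝ (Fin 2)) (hp : p = 0) :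
    phiTilde p = 0 ∧
    phiTilde ⁻¹' {0} = {x : EuclideanSpace ℝ (Fin 2) | |x 0| ≤ 1 / 2} ∧
    {x : EuclideanSpace ℝ (Fin 2) | Tendsto (fun t => Φ t x) atBot (nhds p)} =
      {x : EuclideanSpace ℝ (Fin 2) | x 0 = 0} ∧
    {x : EuclideanSpace ℝ (Fin 2) | Tendsto (fun t => Φ t x) atBot (nhds p)} ⊂
      phiTilde ⁻¹' {phiTilde p} := by
  subst hp
  have hz : phiTilde 0 = 0 := (phiTilde_eq_zero_iff 0).mpr (by simp)
  have hpre : phiTilde ⁻¹' {0} = {x : EuclideanSpace ℝ (Fin 2) | |x 0| ≤ 1 / 2} := by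
    ext x
    simp [Set.mem_preimage, phiTilde_eq_zero_iff]
  have hW : {x : EuclideanSpace ℝ (Fin 2) | Tendsto (fun t => Φ t x) atBot (nhds 0)} =
      {x : EuclideanSpace ℝ (Fin 2) | x 0 = 0} := by
    ext x
    exact flow_tendsto_iff x Φ hΦ
  refine ⟨hz, hpre, hW, ?_⟩
  rw [hW, hz, hpre]
  constructor
  · intro x hx
    simp only [Set.mem_setOf_eq] at hx ⊢
    rw [hx]; norm_num
  · intro hsub
    have hm : (EuclideanSpace.single (0 : Fin 2) (1/2 : ℝ)) ∈
        {x : EuclideanSpace ℝ (Fin 2) | |x 0| ≤ 1 / 2} := by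
      simp only [Set.mem_setOf_eq, EuclideanSpace.single_apply]
      rw [if_pos trivial, abs_of_nonneg (by norm_num : (0:ℝ) ≤ 1/2)]
    have := hsub hm
    simp [EuclideanSpace.single_apply] at this
end
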